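/- arXiv:1808.06242 — 2 statements merged into one kernel-verified Lean document; each statement's English description precedes it below -/
import Mathlib

section
/- If the categories A(Δ) and A(Δ') are isomorphic as abstract categories, then they are concretely isomorphic: there is an isomorphism of categories commuting (up to natural isomorphism) with the underlying set functors. -/
universe u

/-- An algebra of type `Δ = (K i)_{i ∈ I}`: a carrier set with, for each `i`,
a `K i`-ary operation. -/
structure Alg {I : Type u} (K : I → Type u) : Type (u + 1) where
  carrier : Type u
  op : ∀ i, (K i → carrier) → carrier

/-- A homomorphism of algebras of type `K`. -/
@[ext]
structure HomOfAlg {I : Type u} (K : I → Type u) (A B : Alg K) where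
  toFun : A.carrier → B.carrier
  map_op : ∀ i (α : K i → A.carrier), toFun (A.op i α) = B.op i (toFun ∘ α)

/-- The category `A(Δ)` of all algebras of type `K` and homomorphisms. -/
instance algCategory {I : Type u} (K : I → Type u) : CategoryTheory.Category (Alg K) where
  Hom A B := HomOfAlg K A B
  id A := ⟨id, fun _ _ => rfl⟩
  comp f g := ⟨g.toFun ∘ f.toFun, fun i α => by
    show g.toFun (f.toFun _) = _; rw [f.map_op, g.map_op]; rfl⟩
  id_comp f := HomOfAlg.ext rfl
  comp_id f := HomOfAlg.ext rfl
  assoc f g h := HomOfAlg.ext rfl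

/-- The underlying set functor `s : A(Δ) → Set`. -/
def forgetAlg {I : Type u} (K : I → Type u) :
    CategoryTheory.Functor (Alg K) (Type u) where
  obj A := A.carrier
  map f := TypeCat.ofHom f.toFun
  map_id _ := rfl
  map_comp _ _ := rfl

/-- Terms of type `K` over variables `X` (the absolutely free algebra). -/
inductive AlgTerm {I : Type u} (K : I → Type u) (X : Type u) : Type u
  | var : X → AlgTerm K X
  | op : ∀ i, (K i → AlgTerm K X) → AlgTerm K X

/-- The term algebra (absolutely free algebra) on `X`. -/
def TermAlg {I : Type u} (K : I → Type u) (X : Type u) : Alg K :=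
  ⟨AlgTerm K X, AlgTerm.op⟩

/-- Homomorphic extension of an assignment `α : X → A` to the term algebra. -/
def extendHom {I : Type u} {K : I → Type u} {X : Type u} {A : Alg K}
    (α : X → A.carrier) : AlgTerm K X → A.carrier
  | .var x => α x
  | .op i β => A.op i (fun k => extendHom α (β k))

/-- The support of a `K`-ary operation `f : F^K → F`. -/
def supp {F K : Type u} (f : (K → F) → F) : Set (Set K) :=
  {A | ∀ α β : K → F, (∀ k ∈ A, α k = β k) → f α = f β}

/-- Equivalence of types: a bijection of index sets preserving arity cardinalities. -/
def EquivType {I J : Type u} (K : I → Type u) (L : J → Type u) : Prop :=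
  ∃ φ : I ≃ J, ∀ i, Nonempty (K i ≃ L (φ i))

/-- The essential rank of an operation: least cardinality of a support set. -/
noncomputable def essRank {F K : Type u} (f : (K → F) → F) : Cardinal.{u} :=
  sInf {c : Cardinal.{u} | ∃ A ∈ supp f, Cardinal.mk A = c}

/-- `P` is free on the family `b : X → P`. -/
def IsFreeOn {I : Type u} {K : I → Type u} (P : Alg K) {X : Type u}
    (b : X → P.carrier) : Prop :=
  ∀ (A : Alg K) (α : X → A.carrier), ∃! h : HomOfAlg K P A, h.toFun ∘ b = α

/-- `P` is a free algebra (on some basis). -/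
def IsFree {I : Type u} {K : I → Type u} (P : Alg K) : Prop :=
  ∃ (X : Type u) (b : X → P.carrier), IsFreeOn P b

/-- `P` is free of rank 1: free on a single generator. -/
def IsFreeRank1 {I : Type u} {K : I → Type u} (P : Alg K) : Prop :=
  ∃ p : P.carrier, ∀ (A : Alg K) (a : A.carrier),
    ∃! h : HomOfAlg K P A, h.toFun p = a

open CategoryTheory

/-! The free algebra `F` on one generator corepresents the underlying set functor, so it suffices
that an equivalence `E : A(Δ) ≌ A(Δ')` sends `F` to `F'`. Being a separator is invariant, and `F'`
is a retract of every separator of `A(Δ')`, since a separator must hit the variable of `F'`; thus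
`F'` is a retract of `E F`. The corresponding idempotent of `E F` comes from an idempotent of `F`,
i.e. a substitution `x ↦ t` with `t[t/x] = t`. Either `t = x` and `E F ≅ F'`, or `t` is ground and
all homomorphisms out of `F'` would coincide, which they do not. -/

namespace CategoryTheory

variable {C : Type*} [Category C]

def IsCoconstant {X Y : C} (f : X ⟶ Y) : Prop :=
  ∀ ⦃Z : C⦄ (g h : Y ⟶ Z), f ≫ g = f ≫ h

theorem Adjunction.isCoconstant_map {D : Type*} [Category D] {F : C ⥤ D} {G : D ⥤ C}
    (adj : F ⊣ G) {X Y : C} {f : X ⟶ Y} (hf : IsCoconstant f) : IsCoconstant (F.map f) := by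
  intro Z g h
  rw [← (adj.homEquiv Y Z).symm_apply_apply g, ← (adj.homEquiv Y Z).symm_apply_apply h,
    ← adj.homEquiv_naturality_left_symm, ← adj.homEquiv_naturality_left_symm, hf]

theorem Retract.subsingleton_hom_of_isCoconstant {X Y : C} (ρ : Retract X Y)
    (hρ : IsCoconstant (ρ.r ≫ ρ.i)) (Z : C) : Subsingleton (X ⟶ Z) := by
  refine ⟨fun a b => ?_⟩
  have h := hρ (ρ.r ≫ a) (ρ.r ≫ b)
  simp only [Category.assoc, Retract.retract_assoc] at h
  rw [← Category.id_comp a, ← Category.id_comp b, ← ρ.retract, Category.assoc, Category.assoc, h]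

end CategoryTheory

section

variable {I : Type u} {K : I → Type u}

theorem AlgTerm.extendHom_eq_of_subst_eq_self {X : Type u} {σ : X → AlgTerm K X}
    (hσ : ∀ x y, σ x ≠ .var y) {s : AlgTerm K X}
    (hs : extendHom (A := TermAlg K X) σ s = s) {A : Alg K} (α β : X → A.carrier) :
    extendHom α s = extendHom β s := by
  induction s with
  | var x => exact absurd hs (hσ x x)
  | op i γ ih =>
    have hγ : ∀ k, extendHom (A := TermAlg K X) σ (γ k) = γ k :=
      congrFun (eq_of_heq (AlgTerm.op.inj hs).2)
    exact congrArg (A.op i) (funext fun k => ih k (hγ k))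

namespace TermAlg

def lift {X : Type u} {A : Alg K} (α : X → A.carrier) : TermAlg K X ⟶ A :=
  ⟨extendHom α, fun _ _ => rfl⟩

theorem hom_ext {X : Type u} {A : Alg K} {g h : TermAlg K X ⟶ A}
    (hgh : ∀ x, g.toFun (.var x) = h.toFun (.var x)) : g = h := by
  refine HomOfAlg.ext (funext fun t => ?_)
  induction t with
  | var x => exact hgh x
  | op i β ih =>
    exact (g.map_op i β).trans ((congrArg (A.op i) (funext ih)).trans (h.map_op i β).symm)

theorem hom_apply_eq_extendHom {X : Type u} {A : Alg K} (h : TermAlg K X ⟶ A)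
    (t : AlgTerm K X) : h.toFun t = extendHom (h.toFun ∘ .var) t :=
  congrFun (congrArg HomOfAlg.toFun
    (hom_ext (g := h) (h := lift (h.toFun ∘ .var)) fun _ => rfl)) t

variable (K) in
def corepresentableBy : (forgetAlg K).CorepresentableBy (TermAlg K PUnit) where
  homEquiv :=
    { toFun h := h.toFun (.var ⟨⟩)
      invFun a := lift fun _ => a
      left_inv _ := hom_ext fun _ => rfl
      right_inv _ := rfl }
  homEquiv_comp _ _ := rfl

theorem isSeparator : IsSeparator (TermAlg K PUnit) :=
  (isSeparator_def _).2 fun _ _ _ _ hfg => HomOfAlg.ext <| funext fun a =>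
    congrFun (congrArg HomOfAlg.toFun (hfg (lift fun _ => a))) (.var ⟨⟩)

variable (K) in
/-- `TermAlg K PUnit` with a second copy `none` of the variable, which operations treat as the
variable. -/
def DoubledVar : Alg K :=
  ⟨Option (AlgTerm K PUnit), fun i α => some (.op i fun k => (α k).getD (.var ⟨⟩))⟩

def collapse : DoubledVar K ⟶ TermAlg K PUnit :=
  ⟨fun o => o.getD (.var ⟨⟩), fun _ _ => rfl⟩

def inl : TermAlg K PUnit ⟶ DoubledVar K := lift fun _ => some (.var ⟨⟩)

def inr : TermAlg K PUnit ⟶ DoubledVar K := lift fun _ => none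

theorem inl_ne_inr : inl (K := K) ≠ inr := fun h =>
  Option.some_ne_none _ (congrFun (congrArg HomOfAlg.toFun h) (.var ⟨⟩))

theorem apply_op_of_comp_collapse {g : TermAlg K PUnit ⟶ DoubledVar K}
    (hg : g ≫ collapse = 𝟙 _) (i : I) (β : K i → AlgTerm K PUnit) :
    g.toFun (.op i β) = some (.op i β) :=
  (g.map_op i β).trans <| congrArg
    (fun c : TermAlg K PUnit ⟶ TermAlg K PUnit => some (AlgTerm.op i (c.toFun ∘ β))) hg

/-- `inl` and `inr` agree off the variable, so they are separated only by maps hitting it. -/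
theorem exists_apply_eq_var_of_isSeparator {Q : Alg K} (hQ : IsSeparator Q) :
    ∃ (h : Q ⟶ TermAlg K PUnit) (a : Q.carrier), h.toFun a = .var ⟨⟩ := by
  by_contra! hvar
  refine inl_ne_inr (hQ.def _ _ fun h => HomOfAlg.ext (funext fun a => ?_))
  change inl.toFun (h.toFun a) = inr.toFun (h.toFun a)
  cases ha : h.toFun a with
  | var _ => exact absurd ha (hvar h a)
  | op i β =>
    rw [apply_op_of_comp_collapse (hom_ext fun _ => rfl),
      apply_op_of_comp_collapse (hom_ext fun _ => rfl)]

theorem nonempty_retract_of_isSeparator {Q : Alg K} (hQ : IsSeparator Q) :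
    Nonempty (Retract (TermAlg K PUnit) Q) :=
  let ⟨h, a, ha⟩ := exists_apply_eq_var_of_isSeparator hQ
  ⟨⟨lift fun _ => a, h, hom_ext fun _ => ha⟩⟩

/-- An idempotent endomorphism is the substitution `x ↦ t` with `t[t/x] = t`: either `t = x`, or
`t` has no variable at all. -/
theorem eq_id_or_isCoconstant_of_idem {m : TermAlg K PUnit ⟶ TermAlg K PUnit} (hm : m ≫ m = m) :
    m = 𝟙 _ ∨ IsCoconstant m := by
  have hfix : extendHom (A := TermAlg K PUnit) (fun _ => m.toFun (.var ⟨⟩)) (m.toFun (.var ⟨⟩))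
      = m.toFun (.var ⟨⟩) :=
    (hom_apply_eq_extendHom m _).symm.trans (congrFun (congrArg HomOfAlg.toFun hm) _)
  cases ht : m.toFun (.var ⟨⟩) with
  | var _ => exact .inl (hom_ext fun _ => ht)
  | op i β =>
    rw [ht] at hfix
    refine .inr fun Z g h => hom_ext fun _ => ?_
    change g.toFun (m.toFun _) = h.toFun (m.toFun _)
    rw [ht, hom_apply_eq_extendHom g, hom_apply_eq_extendHom h]
    exact AlgTerm.extendHom_eq_of_subst_eq_self (fun _ _ h => by cases h) hfix _ _

end TermAlg

theorem CategoryTheory.Equivalence.nonempty_functor_obj_termAlg_iso {J : Type u} {L : J → Type u}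
    (E : Alg K ≌ Alg L) : Nonempty (E.functor.obj (TermAlg K PUnit) ≅ TermAlg L PUnit) := by
  obtain ⟨ρ⟩ := TermAlg.nonempty_retract_of_isSeparator (TermAlg.isSeparator.of_equivalence E)
  have hidem : E.functor.preimage (ρ.r ≫ ρ.i) ≫ E.functor.preimage (ρ.r ≫ ρ.i)
      = E.functor.preimage (ρ.r ≫ ρ.i) :=
    E.functor.map_injective (by simp)
  rcases TermAlg.eq_id_or_isCoconstant_of_idem hidem with hid | hconst
  · have hri : ρ.r ≫ ρ.i = 𝟙 _ := by simpa using congrArg E.functor.map hid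
    exact ⟨⟨ρ.r, ρ.i, hri, ρ.retract⟩⟩
  · have := ρ.subsingleton_hom_of_isCoconstant
      (by simpa using E.toAdjunction.isCoconstant_map hconst) (TermAlg.DoubledVar L)
    exact absurd (Subsingleton.elim _ _) (TermAlg.inl_ne_inr (K := L))

theorem CategoryTheory.Equivalence.nonempty_functor_comp_forgetAlg_iso {J : Type u}
    {L : J → Type u} (E : Alg K ≌ Alg L) : Nonempty (E.functor ⋙ forgetAlg L ≅ forgetAlg K) :=
  let ⟨e⟩ := E.symm.nonempty_functor_obj_termAlg_iso
  let corep : (E.functor ⋙ forgetAlg L).CorepresentableBy (TermAlg K PUnit) :=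
    ((E.symm.toAdjunction.corepresentableBy (TermAlg L PUnit)).ofIso
      (Functor.isoWhiskerLeft E.functor (TermAlg.corepresentableBy L).toIso)).ofIsoObj e.symm
  ⟨corep.toIso.symm ≪≫ (TermAlg.corepresentableBy K).toIso⟩

end

/-- abstractly isomorphic categories of algebras are concretely isomorphic
(the isomorphism commutes with underlying set functors up to natural isomorphism). -/
theorem iso_implies_concrete_iso {I J : Type u} (K : I → Type u) (L : J → Type u)
    (h : ∃ (T : Functor (Alg K) (Alg L)) (S : Functor (Alg L) (Alg K)),
      T.comp S = Functor.id (Alg K) ∧ S.comp T = Functor.id (Alg L)) :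
    ∃ (T : Functor (Alg K) (Alg L)) (S : Functor (Alg L) (Alg K)),
      T.comp S = Functor.id (Alg K) ∧ S.comp T = Functor.id (Alg L) ∧
      Nonempty (T.comp (forgetAlg L) ≅ forgetAlg K) := by
  obtain ⟨T, S, hTS, hST⟩ := h
  let E : Alg K ≌ Alg L := CategoryTheory.Equivalence.mk T S (eqToIso hTS.symm) (eqToIso hST)
  exact ⟨T, S, hTS, hST, E.nonempty_functor_comp_forgetAlg_iso⟩
end

section
/- Let Δ = (K_i)_{i∈I} with each K_i finite and I finite, and Δ' = (L_j)_{j∈J} likewise. If the term algebras (absolutely free algebras) on every set X are isomorphic as sets equipped with their endomorphism monoids compatibly with the inclusion of X, for all X, then Δ and Δ' are equivalent types. -/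
universe u

open CategoryTheory

/-! Work over a nontrivial `X` containing a copy of every arity. A bijection of term sets that
fixes the variables and commutes with all endomorphisms commutes with substitution, so it
preserves whatever is defined from substitution alone: being a variable, the variables a term
depends on, and being of the form `op i (var ∘ f)`. Hence it sends `op i` applied to `#(K i)`
distinct variables to some `op (φ i)` applied to the same variables, giving
`#(K i) ≤ #(L (φ i))`; the inverse bijection yields the inverse of `φ` and the reverse
inequality. -/

open Function

namespace AlgTerm

variable {I : Type u} {K : I → Type u} {X : Type u}

def subst (σ : X → AlgTerm K X) : AlgTerm K X → AlgTerm K X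
  | var x => σ x
  | op i β => op i fun k => subst σ (β k)

@[simp] lemma subst_var (σ : X → AlgTerm K X) (x : X) : subst σ (var x) = σ x := rfl

@[simp] lemma subst_op (σ : X → AlgTerm K X) (i : I) (β : K i → AlgTerm K X) :
    subst σ (op i β) = op i fun k => subst σ (β k) := rfl

def substHom (σ : X → AlgTerm K X) : HomOfAlg K (TermAlg K X) (TermAlg K X) :=
  ⟨subst σ, fun _ _ => rfl⟩

lemma eq_subst_of_hom (h : HomOfAlg K (TermAlg K X) (TermAlg K X)) (t : AlgTerm K X) :
    h.toFun t = subst (fun x => h.toFun (var x)) t := by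
  induction t with
  | var x => rfl
  | op i β ih => exact (h.map_op i β).trans (congrArg (op i) (funext ih))

def IsVar (t : AlgTerm K X) : Prop := ∃ x, t = var x

def DependsOn (t : AlgTerm K X) (x : X) : Prop :=
  ∃ σ σ' : X → AlgTerm K X, (∀ y, y ≠ x → σ y = σ' y) ∧ subst σ t ≠ subst σ' t

/-- Characterizes the terms `op i (var ∘ f)` through substitution alone, so that it is preserved
by bijections of term sets that commute with substitutions. -/
def IsIndecomposable (t : AlgTerm K X) : Prop :=
  ¬ IsVar t ∧ ∀ s σ, subst σ s = t → IsVar s ∨ ∀ x, DependsOn s x → IsVar (σ x)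

lemma mem_range_of_dependsOn_op_var {i : I} {f : K i → X} {x : X}
    (h : DependsOn (op i (var ∘ f)) x) : x ∈ Set.range f := by
  obtain ⟨σ, σ', hagree, hne⟩ := h
  by_contra hx
  exact hne (congrArg (op i) (funext fun k => hagree (f k) fun hk => hx ⟨k, hk⟩))

lemma dependsOn_op_var_iff [Nontrivial X] {i : I} {f : K i → X} {x : X} :
    DependsOn (op i (var ∘ f)) x ↔ x ∈ Set.range f := by
  classical
  refine ⟨mem_range_of_dependsOn_op_var, ?_⟩
  rintro ⟨k, rfl⟩
  obtain ⟨y, hy⟩ := exists_ne (f k)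
  refine ⟨var, update var (f k) (var y), fun z hz => by simp [hz], fun heq => ?_⟩
  simp only [subst_op, op.injEq, heq_eq_eq, true_and] at heq
  have := congrFun heq k
  simp only [comp_apply, subst_var, update_self, var.injEq] at this
  exact hy this.symm

lemma isIndecomposable_op_var (i : I) (f : K i → X) : IsIndecomposable (op i (var ∘ f)) := by
  refine ⟨fun ⟨x, hx⟩ => (by cases hx), fun s σ hs => ?_⟩
  cases s with
  | var y => exact Or.inl ⟨y, rfl⟩
  | op i' β =>
    obtain ⟨rfl, hβ⟩ := op.inj hs
    replace hβ : ∀ k, subst σ (β k) = var (f k) := congrFun (eq_of_heq hβ)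
    have hβvar : ∀ k, ∃ y, β k = var y := by
      intro k
      cases hk : β k with
      | var y => exact ⟨y, rfl⟩
      | op _ _ => simpa [hk] using hβ k
    choose g hg using hβvar
    obtain rfl : β = var ∘ g := funext hg
    refine Or.inr fun x hx => ?_
    obtain ⟨k, rfl⟩ := mem_range_of_dependsOn_op_var hx
    exact ⟨f k, hβ k⟩

/-- If `op i β` had an argument `β k` that is not a variable, then `op i β` would be the
instance of `op i (var ∘ emb)` under a substitution sending the variable `emb k` to `β k`. -/
lemma IsIndecomposable.exists_eq_op_var [Nontrivial X] (hemb : ∀ i, Nonempty (K i ↪ X))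
    {t : AlgTerm K X} (ht : IsIndecomposable t) :
    ∃ i, ∃ f : K i → X, t = op i (var ∘ f) := by
  obtain ⟨hnvar, hinst⟩ := ht
  cases t with
  | var x => exact absurd ⟨x, rfl⟩ hnvar
  | op i β =>
    obtain ⟨emb⟩ := hemb i
    have hext : subst (extend emb β var) (op i (var ∘ emb)) = op i β :=
      congrArg (op i) (funext fun k => emb.injective.extend_apply β var k)
    have hβvar : ∀ k, ∃ y, β k = var y := by
      rcases hinst _ _ hext with ⟨x, hx⟩ | hvars
      · cases hx
      · intro k
        obtain ⟨y, hy⟩ := hvars (emb k) (dependsOn_op_var_iff.2 ⟨k, rfl⟩)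
        exact ⟨y, (emb.injective.extend_apply β var k).symm.trans hy⟩
    choose f hf using hβvar
    exact ⟨i, f, congrArg (op i) (funext hf)⟩

end AlgTerm

open AlgTerm

variable {I J : Type u} {K : I → Type u} {L : J → Type u} {X : Type u}

structure IsSubstEquiv (e : AlgTerm K X ≃ AlgTerm L X) : Prop where
  map_var : ∀ x, e (var x) = var x
  map_subst : ∀ σ t, e (subst σ t) = subst (fun x => e (σ x)) (e t)

/-- An endomorphism `τ` is the substitution given by its values on variables, and `hvar`
forces these to be `e ∘ σ`. -/
lemma isSubstEquiv_of_forall_exists_hom {e : AlgTerm K X ≃ AlgTerm L X}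
    (hvar : ∀ x, e (var x) = var x)
    (hcomm : ∀ σ : HomOfAlg K (TermAlg K X) (TermAlg K X),
      ∃ τ : HomOfAlg L (TermAlg L X) (TermAlg L X), ∀ t, e (σ.toFun t) = τ.toFun (e t)) :
    IsSubstEquiv e := by
  refine ⟨hvar, fun σ t => ?_⟩
  obtain ⟨τ, hτ⟩ := hcomm (substHom σ)
  have hτvar : ∀ x, τ.toFun (var x) = e (σ x) := fun x => by
    have := hτ (var x)
    rw [hvar] at this
    exact this.symm
  exact (hτ t).trans ((eq_subst_of_hom τ (e t)).trans (congrArg (subst · (e t)) (funext hτvar)))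

namespace IsSubstEquiv

variable {e : AlgTerm K X ≃ AlgTerm L X}

lemma symm (he : IsSubstEquiv e) : IsSubstEquiv e.symm where
  map_var x := e.symm_apply_eq.2 (he.map_var x).symm
  map_subst ρ s := e.symm_apply_eq.2 (by simp [he.map_subst])

lemma isVar_apply_iff (he : IsSubstEquiv e) {t : AlgTerm K X} : IsVar (e t) ↔ IsVar t := by
  constructor
  · rintro ⟨x, hx⟩
    exact ⟨x, e.injective (hx.trans (he.map_var x).symm)⟩
  · rintro ⟨x, rfl⟩
    exact ⟨x, he.map_var x⟩

lemma dependsOn_apply_of_dependsOn (he : IsSubstEquiv e) {t : AlgTerm K X} {x : X}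
    (ht : DependsOn t x) : DependsOn (e t) x := by
  obtain ⟨σ, σ', hagree, hne⟩ := ht
  refine ⟨fun y => e (σ y), fun y => e (σ' y), fun y hy => congrArg e (hagree y hy), ?_⟩
  rw [← he.map_subst, ← he.map_subst]
  exact e.injective.ne hne

lemma dependsOn_apply_iff (he : IsSubstEquiv e) {t : AlgTerm K X} {x : X} :
    DependsOn (e t) x ↔ DependsOn t x :=
  ⟨fun h => by simpa using he.symm.dependsOn_apply_of_dependsOn h,
    he.dependsOn_apply_of_dependsOn⟩

lemma isIndecomposable_apply (he : IsSubstEquiv e) {t : AlgTerm K X}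
    (ht : IsIndecomposable t) : IsIndecomposable (e t) := by
  obtain ⟨hnvar, hinst⟩ := ht
  refine ⟨fun h => hnvar (he.isVar_apply_iff.1 h), fun s ρ hs => ?_⟩
  have hs' : subst (fun x => e.symm (ρ x)) (e.symm s) = t := by
    rw [← he.symm.map_subst, hs, Equiv.symm_apply_apply]
  rcases hinst _ _ hs' with hvar | hvars
  · exact Or.inl (he.symm.isVar_apply_iff.1 hvar)
  · exact Or.inr fun x hx =>
      he.symm.isVar_apply_iff.1 (hvars x (he.symm.dependsOn_apply_iff.2 hx))

/-- All terms `op i (var ∘ g)` are substitution instances of `op i (var ∘ emb)` for an injective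
`emb`, so their images share the head symbol of its image. -/
lemma exists_index [Nontrivial X] (he : IsSubstEquiv e) (hK : ∀ i, Nonempty (K i ↪ X))
    (hL : ∀ j, Nonempty (L j ↪ X)) (i : I) :
    ∃ j, ∀ g : K i → X, ∃ f : L j → X, e (op i (var ∘ g)) = op j (var ∘ f) := by
  classical
  obtain ⟨emb⟩ := hK i
  obtain ⟨j, f, hf⟩ :=
    (he.isIndecomposable_apply (isIndecomposable_op_var i emb)).exists_eq_op_var hL
  refine ⟨j, fun g => ⟨extend emb g id ∘ f, ?_⟩⟩
  have hg : op i (var ∘ g) = subst (var ∘ extend emb g id) (op i (var ∘ emb)) :=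
    congrArg (op i) (funext fun k => by simp [emb.injective.extend_apply])
  rw [hg, he.map_subst, hf]
  exact congrArg (op j) (funext fun k => he.map_var _)

lemma mk_le_of_apply_op_var [Nontrivial X] (he : IsSubstEquiv e) {i : I} {j : J}
    (emb : K i ↪ X) {f : L j → X} (hf : e (op i (var ∘ emb)) = op j (var ∘ f)) :
    Cardinal.mk (K i) ≤ Cardinal.mk (L j) := by
  have hrange : Set.range emb = Set.range f := by
    ext x
    rw [← dependsOn_op_var_iff, ← dependsOn_op_var_iff, ← hf, he.dependsOn_apply_iff]
  calc Cardinal.mk (K i) = Cardinal.mk (Set.range emb) :=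
        (Cardinal.mk_range_eq _ emb.injective).symm
    _ = Cardinal.mk (Set.range f) := by rw [hrange]
    _ ≤ Cardinal.mk (L j) := Cardinal.mk_range_le

end IsSubstEquiv

lemma leftInverse_of_apply_op_var [Nonempty X] {e : AlgTerm K X ≃ AlgTerm L X}
    {φ : I → J} {ψ : J → I}
    (hφ : ∀ i (g : K i → X), ∃ f : L (φ i) → X,
      e (op i (var ∘ g)) = op (φ i) (var ∘ f))
    (hψ : ∀ j (f : L j → X), ∃ g : K (ψ j) → X,
      e.symm (op j (var ∘ f)) = op (ψ j) (var ∘ g)) :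
    LeftInverse ψ φ := by
  intro i
  obtain ⟨f, hf⟩ := hφ i fun _ => Classical.arbitrary X
  obtain ⟨g, hg⟩ := hψ (φ i) f
  rw [← hf, Equiv.symm_apply_apply] at hg
  exact (op.inj hg).1.symm

theorem IsSubstEquiv.equivType [Nontrivial X] {e : AlgTerm K X ≃ AlgTerm L X}
    (he : IsSubstEquiv e) (hK : ∀ i, Nonempty (K i ↪ X)) (hL : ∀ j, Nonempty (L j ↪ X)) :
    EquivType K L := by
  choose φ hφ using he.exists_index hK hL
  choose ψ hψ using he.symm.exists_index hL hK
  have hψφ : LeftInverse ψ φ := leftInverse_of_apply_op_var hφ hψ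
  have hφψ : LeftInverse φ ψ :=
    leftInverse_of_apply_op_var (e := e.symm) hψ (by simpa using hφ)
  have hKL : ∀ i, Cardinal.mk (K i) ≤ Cardinal.mk (L (φ i)) := fun i => by
    obtain ⟨emb⟩ := hK i
    obtain ⟨f, hf⟩ := hφ i emb
    exact he.mk_le_of_apply_op_var emb hf
  have hLK : ∀ j, Cardinal.mk (L j) ≤ Cardinal.mk (K (ψ j)) := fun j => by
    obtain ⟨emb⟩ := hL j
    obtain ⟨g, hg⟩ := hψ j emb
    exact he.symm.mk_le_of_apply_op_var emb hg
  refine ⟨⟨φ, ψ, hψφ, hφψ⟩, fun i => Cardinal.eq.1 (le_antisymm (hKL i) ?_)⟩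
  have := hLK (φ i)
  rwa [hψφ i] at this

theorem term_algebra_endo_monoids_determine_type_general {I J : Type u}
    (K : I → Type u) (L : J → Type u)
    (h : ∀ X : Type u, ∃ e : AlgTerm K X ≃ AlgTerm L X,
      (∀ x : X, e (AlgTerm.var x) = AlgTerm.var x) ∧
      (∀ σ : HomOfAlg K (TermAlg K X) (TermAlg K X),
        ∃ τ : HomOfAlg L (TermAlg L X) (TermAlg L X),
          ∀ t, e (σ.toFun t) = τ.toFun (e t)) ∧
      (∀ τ : HomOfAlg L (TermAlg L X) (TermAlg L X),
        ∃ σ : HomOfAlg K (TermAlg K X) (TermAlg K X),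
          ∀ t, e (σ.toFun t) = τ.toFun (e t))) :
    EquivType K L := by
  -- every arity embeds into `X`, and the two extra points make `X` nontrivial
  obtain ⟨e, hvar, hcomm, -⟩ := h (Option (Option ((Σ i, K i) ⊕ (Σ j, L j))))
  exact (isSubstEquiv_of_forall_exists_hom hvar hcomm).equivType
    (fun i => ⟨(Embedding.sigmaMk i).trans (Embedding.inl.trans (Embedding.some.trans .some))⟩)
    (fun j => ⟨(Embedding.sigmaMk j).trans (Embedding.inr.trans (Embedding.some.trans .some))⟩)

/-- if for every set `X` the term algebras of the two (finitary, finite) types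
over `X` are isomorphic as sets with endomorphism monoids, compatibly with the inclusion of
`X`, then the types are equivalent. -/
theorem term_algebra_endo_monoids_determine_type {I J : Type u}
    (K : I → Type u) (L : J → Type u) [Finite I] [Finite J]
    (hK : ∀ i, Finite (K i)) (hL : ∀ j, Finite (L j))
    (h : ∀ X : Type u, ∃ e : AlgTerm K X ≃ AlgTerm L X,
      (∀ x : X, e (AlgTerm.var x) = AlgTerm.var x) ∧
      (∀ σ : HomOfAlg K (TermAlg K X) (TermAlg K X),
        ∃ τ : HomOfAlg L (TermAlg L X) (TermAlg L X),
          ∀ t, e (σ.toFun t) = τ.toFun (e t)) ∧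
      (∀ τ : HomOfAlg L (TermAlg L X) (TermAlg L X),
        ∃ σ : HomOfAlg K (TermAlg K X) (TermAlg K X),
          ∀ t, e (σ.toFun t) = τ.toFun (e t))) :
    EquivType K L :=
  term_algebra_endo_monoids_determine_type_general K L h
end
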